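/- Let X be a continuum. A point c ∈ X is a cut point separating A ⊆ X from B ⊆ X if and only if there exist subcontinua Y, Z of X such that A ⊆ Y − {c}, B ⊆ Z − {c}, Y ∪ Z = X, and Y ∩ Z = {c}. -/

import Mathlib

open Set

section Defs

variable {X : Type*} [TopologicalSpace X]

/-- `U` is relatively open in the subspace `X - C`. -/
def RelOpen (C U : Set X) : Prop := ∃ O : Set X, IsOpen O ∧ U = O ∩ Cᶜ

/-- `U, V` form a disconnection of `X - C` into two nonempty relatively open sets. -/
def SepPair (C U V : Set X) : Prop :=
  RelOpen C U ∧ RelOpen C V ∧ Disjoint U V ∧ U ∪ V = Cᶜ ∧ U.Nonempty ∧ V.Nonempty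

/-- `C` separates `A` from `B`. -/
def Separates (C A B : Set X) : Prop := ∃ U V : Set X, SepPair C U V ∧ A ⊆ U ∧ B ⊆ V

/-- `C` separates `X`, i.e. `X - C` is disconnected. -/
def Cuts (C : Set X) : Prop := ∃ U V : Set X, SepPair C U V

def CutPoint (c : X) : Prop := Cuts ({c} : Set X)

def CutPair (c d : X) : Prop := c ≠ d ∧ ¬CutPoint c ∧ ¬CutPoint d ∧ Cuts ({c, d} : Set X)

def IsSubcontinuum (Y : Set X) : Prop := IsCompact Y ∧ IsConnected Y

/-- A nondegenerate set no two of whose points are separated by a cut pair. -/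
def InsepSet (A : Set X) : Prop :=
  A.Nontrivial ∧ ∀ c d : X, CutPair c d → ∀ a ∈ A, ∀ b ∈ A,
    ¬Separates ({c, d} : Set X) {a} {b}

def MaxInsep (A : Set X) : Prop := InsepSet A ∧ ∀ B : Set X, InsepSet B → A ⊆ B → B = A

def InsepCutPair (a b : X) : Prop := CutPair a b ∧ InsepSet ({a, b} : Set X)

/-- A cyclic decomposition of `X` by the points `x 0, …, x (n-1)` (cyclically indexed),
into subcontinua `M i`, consecutive ones meeting in a single point. -/
def CyclicDecomp (n : ℕ) (x : ZMod n → X) (M : ZMod n → Set X) : Prop :=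
  2 < n ∧ Function.Injective x ∧
  (∀ i, IsSubcontinuum (M i)) ∧
  (∀ i, M i ∩ M (i + 1) = {x (i + 1)}) ∧
  (∀ i j, i ≠ j → j ≠ i + 1 → i ≠ j + 1 → M i ∩ M j = ∅) ∧
  (⋃ i, M i) = univ

/-- A finite set is cyclic if it is a cut pair, or admits a cyclic decomposition. -/
def CyclicFinset (S : Set X) : Prop :=
  (∃ a b : X, CutPair a b ∧ S = {a, b}) ∨
  (∃ n : ℕ, ∃ (x : ZMod n → X) (M : ZMod n → Set X), CyclicDecomp n x M ∧ S = Set.range x)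

/-- A set (with more than one point) is cyclic if every finite subset with more
than one element is cyclic. -/
def CyclicSet (S : Set X) : Prop :=
  ∀ A : Finset X, ↑A ⊆ S → 1 < A.card → CyclicFinset (↑A : Set X)

/-- A necklace: a maximal cyclic subset with more than two elements. -/
def Necklace (S : Set X) : Prop :=
  CyclicSet S ∧ (∃ a ∈ S, ∃ b ∈ S, ∃ c ∈ S, a ≠ b ∧ a ≠ c ∧ b ≠ c) ∧
  ∀ S' : Set X, CyclicSet S' → S ⊆ S' → S' = S

/-- Membership in the collection `R`: necklaces, maximal inseparable sets,
and inseparable cut pairs. -/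
def InR (S : Set X) : Prop :=
  Necklace S ∨ MaxInsep S ∨ ∃ a b : X, InsepCutPair a b ∧ S = {a, b}

/-- `A` has exactly two connected components. -/
def TwoComponents (A : Set X) : Prop :=
  ∃ u ∈ A, ∃ v ∈ A, connectedComponentIn A u ≠ connectedComponentIn A v ∧
    ∀ w ∈ A, connectedComponentIn A w = connectedComponentIn A u ∨
      connectedComponentIn A w = connectedComponentIn A v

/-- `S`-equivalence of points of `X - S`: they lie in the same piece of every
cyclic decomposition of `X` by a finite subset of `S`. -/
def SEquiv (S : Set X) (y z : X) : Prop :=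
  y ∉ S ∧ z ∉ S ∧
  ∀ (n : ℕ) (x : ZMod n → X) (M : ZMod n → Set X),
    CyclicDecomp n x M → Set.range x ⊆ S → ∃ i, y ∈ M i ∧ z ∈ M i

end Defs

/-!
If `c` splits `X \ {c}` into open pieces `U` and `V`, the subcontinua are `U ∪ {c} = Vᶜ` and
`V ∪ {c} = Uᶜ`; they are connected because a clopen piece of `U ∪ {c}` missing `c` would be
clopen in the connected space `X`. Conversely, `Y \ {c} = Zᶜ` and `Z \ {c} = Yᶜ` are open and
split `X \ {c}`.
-/

section

variable {X : Type*} [TopologicalSpace X]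

theorem isConnected_of_isClosed_of_isOpen_diff [ConnectedSpace X] {S Y : Set X}
    (hY : IsClosed Y) (hS : IsConnected S) (hSY : S ⊆ Y) (hYS : IsOpen (Y \ S)) :
    IsConnected Y := by
  refine ⟨hS.nonempty.mono hSY, ?_⟩
  rw [isPreconnected_iff_subset_of_fully_disjoint_closed hY]
  have hsubset : ∀ u v : Set X, IsClosed u → IsClosed v → Y ⊆ u ∪ v → Disjoint u v → S ⊆ u →
      Y ⊆ u := by
    intro u v hu hv hcover huv hSu
    -- `Y ∩ v` is clopen in `X` and misses `S`, hence empty.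
    have hopen : Y ∩ v = (Y \ S) ∩ uᶜ := by
      ext x
      constructor
      · rintro ⟨hxY, hxv⟩
        exact ⟨⟨hxY, fun hxS => huv.notMem_of_mem_left (hSu hxS) hxv⟩,
          huv.notMem_of_mem_right hxv⟩
      · rintro ⟨⟨hxY, -⟩, hxu⟩
        exact ⟨hxY, (hcover hxY).resolve_left hxu⟩
    have hclopen : IsClopen (Y ∩ v) := ⟨hY.inter hv, hopen ▸ hYS.inter hu.isOpen_compl⟩
    obtain ⟨s, hs⟩ := hS.nonempty
    have hempty : Y ∩ v = ∅ := (isClopen_iff.mp hclopen).resolve_right fun h =>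
      huv.notMem_of_mem_left (hSu hs) (h.symm ▸ mem_univ s : s ∈ Y ∩ v).2
    exact fun x hxY => (hcover hxY).resolve_right fun hxv =>
      (hempty.subset ⟨hxY, hxv⟩ : x ∈ (∅ : Set X))
  intro u v hu hv hcover huv
  rcases isPreconnected_iff_subset_of_disjoint_closed.mp hS.isPreconnected u v hu hv
    (hSY.trans hcover) (by rw [huv.inter_eq, inter_empty]) with hSu | hSv
  · exact Or.inl (hsubset u v hu hv hcover huv hSu)
  · exact Or.inr (hsubset v u hv hu (union_comm u v ▸ hcover) huv.symm hSv)

theorem RelOpen.isOpen {C U : Set X} (h : RelOpen C U) (hC : IsClosed C) : IsOpen U := by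
  obtain ⟨O, hO, rfl⟩ := h
  exact hO.inter hC.isOpen_compl

theorem relOpen_diff_of_union_eq_univ {C Y Z : Set X} (hZ : IsClosed Z) (hunion : Y ∪ Z = univ)
    (hinter : Y ∩ Z = C) : RelOpen C (Y \ C) := by
  refine ⟨Zᶜ, hZ.isOpen_compl, ?_⟩
  ext x
  have hx : x ∈ Y ∪ Z := hunion ▸ mem_univ x
  have hxC : x ∈ Y ∩ Z ↔ x ∈ C := by rw [hinter]
  simp only [mem_sdiff, mem_inter_iff, mem_compl_iff, mem_union] at hx hxC ⊢
  tauto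

theorem sepPair_diff_of_union_eq_univ {C Y Z : Set X} (hY : IsClosed Y) (hZ : IsClosed Z)
    (hunion : Y ∪ Z = univ) (hinter : Y ∩ Z = C) (hYne : (Y \ C).Nonempty)
    (hZne : (Z \ C).Nonempty) : SepPair C (Y \ C) (Z \ C) := by
  refine ⟨relOpen_diff_of_union_eq_univ hZ hunion hinter,
    relOpen_diff_of_union_eq_univ hY (union_comm Y Z ▸ hunion) (inter_comm Y Z ▸ hinter),
    ?_, by rw [← union_sdiff_distrib, hunion, compl_eq_univ_sdiff], hYne, hZne⟩
  rw [Set.disjoint_left]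
  rintro x ⟨hxY, hxC⟩ ⟨hxZ, -⟩
  exact hxC (hinter ▸ ⟨hxY, hxZ⟩)

namespace SepPair

variable {C U V : Set X}

theorem relOpen_left (h : SepPair C U V) : RelOpen C U := h.1

theorem relOpen_right (h : SepPair C U V) : RelOpen C V := h.2.1

theorem disjoint (h : SepPair C U V) : Disjoint U V := h.2.2.1

theorem union_eq (h : SepPair C U V) : U ∪ V = Cᶜ := h.2.2.2.1

theorem symm (h : SepPair C U V) : SepPair C V U :=
  let ⟨hU, hV, hUV, hcover, hUne, hVne⟩ := h
  ⟨hV, hU, hUV.symm, union_comm U V ▸ hcover, hVne, hUne⟩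

theorem disjoint_left (h : SepPair C U V) : Disjoint U C :=
  subset_compl_iff_disjoint_right.mp (h.union_eq ▸ subset_union_left)

theorem union_diff (h : SepPair C U V) : (U ∪ C) \ C = U := by
  rw [union_sdiff_right, h.disjoint_left.sdiff_eq_left]

theorem union_eq_compl (h : SepPair C U V) : U ∪ C = Vᶜ := by
  ext x
  have hx : x ∈ U ∪ V ↔ x ∈ Cᶜ := by rw [h.union_eq]
  have hxUV : x ∈ U → x ∉ V := fun hxU => h.disjoint.notMem_of_mem_left hxU
  simp only [mem_union, mem_compl_iff] at hx ⊢
  tauto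

theorem isClosed_union (h : SepPair C U V) (hC : IsClosed C) : IsClosed (U ∪ C) :=
  h.union_eq_compl ▸ (h.relOpen_right.isOpen hC).isClosed_compl

theorem isConnected_union [ConnectedSpace X] (h : SepPair C U V) (hC : IsClosed C)
    (hCconn : IsConnected C) : IsConnected (U ∪ C) :=
  isConnected_of_isClosed_of_isOpen_diff (h.isClosed_union hC) hCconn subset_union_right
    (by rw [h.union_diff]; exact h.relOpen_left.isOpen hC)

theorem union_union_eq_univ (h : SepPair C U V) : (U ∪ C) ∪ (V ∪ C) = univ := by
  rw [union_union_union_comm, union_self, h.union_eq, compl_union_self]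

theorem union_inter_union (h : SepPair C U V) : (U ∪ C) ∩ (V ∪ C) = C := by
  rw [← inter_union_distrib_right, h.disjoint.inter_eq, empty_union]

end SepPair

end

theorem stmt3 {X : Type*} [MetricSpace X] [CompactSpace X] [ConnectedSpace X]
    (c : X) (A B : Set X) (hAne : A.Nonempty) (hBne : B.Nonempty) :
    (CutPoint c ∧ Separates ({c} : Set X) A B) ↔
      ∃ Y Z : Set X, IsSubcontinuum Y ∧ IsSubcontinuum Z ∧
        A ⊆ Y \ {c} ∧ B ⊆ Z \ {c} ∧ Y ∪ Z = Set.univ ∧ Y ∩ Z = {c} := by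
  constructor
  · rintro ⟨-, U, V, h, hAU, hBV⟩
    have hc : IsClosed ({c} : Set X) := isClosed_singleton
    exact ⟨U ∪ {c}, V ∪ {c},
      ⟨(h.isClosed_union hc).isCompact, h.isConnected_union hc isConnected_singleton⟩,
      ⟨(h.symm.isClosed_union hc).isCompact, h.symm.isConnected_union hc isConnected_singleton⟩,
      h.union_diff.symm ▸ hAU, h.symm.union_diff.symm ▸ hBV,
      h.union_union_eq_univ, h.union_inter_union⟩
  · rintro ⟨Y, Z, hY, hZ, hAY, hBZ, hunion, hinter⟩
    have h := sepPair_diff_of_union_eq_univ hY.1.isClosed hZ.1.isClosed hunion hinter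
      (hAne.mono hAY) (hBne.mono hBZ)
    exact ⟨⟨_, _, h⟩, _, _, h, hAY, hBZ⟩
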